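/- The stationary density satisfies the self-consistency relations (1/2)·Σ_{ω ∈ {−ω₀, ω₀}} ∫₀^{2π} cos(u)·q(u, ω) du = r and (1/2)·Σ_{ω ∈ {−ω₀, ω₀}} ∫₀^{2π} sin(u)·q(u, ω) du = 0, and consequently ⟨J∗q⟩_μ(θ) = −K·r·sin(θ) for all θ ∈ ℝ. -/

import Mathlib

noncomputable section

open MeasureTheory

/-- `G u ω x = x·cos u + 2ωu`. -/
def G (u ω x : ℝ) : ℝ := x * Real.cos u + 2 * ω * u

/-- The unnormalized stationary profile `S(θ, ω, x)`. -/
def S (θ ω x : ℝ) : ℝ :=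
  Real.exp (G θ ω x) *
    ((1 - Real.exp (4 * Real.pi * ω)) * (∫ u in (0:ℝ)..θ, Real.exp (-(G u ω x))) +
      Real.exp (4 * Real.pi * ω) * (∫ u in (0:ℝ)..(2 * Real.pi), Real.exp (-(G u ω x))))

/-- The normalization constant `Z(ω, x)`. -/
def Z (ω x : ℝ) : ℝ := ∫ θ in (0:ℝ)..(2 * Real.pi), S θ ω x

/-- `Ψ_μ` for the binary disorder law `μ = (1/2)(δ_{-ω₀} + δ_{ω₀})`. -/
def psiMu (ω₀ x : ℝ) : ℝ :=
  (1 / 2) * ((∫ θ in (0:ℝ)..(2 * Real.pi), Real.cos θ * S θ (-ω₀) x) / Z (-ω₀) x +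
    (∫ θ in (0:ℝ)..(2 * Real.pi), Real.cos θ * S θ ω₀ x) / Z ω₀ x)

/-- The stationary density `q(θ, ω) = S(θ, ω, 2Kr)/Z(ω, 2Kr)`. -/
def q (K r θ ω : ℝ) : ℝ := S θ ω (2 * K * r) / Z ω (2 * K * r)

/-- `κ(ω) = (1 − exp(4πω))/(2 Z(ω, 2Kr))`. -/
def kap (K r ω : ℝ) : ℝ := (1 - Real.exp (4 * Real.pi * ω)) / (2 * Z ω (2 * K * r))

/-- The averaged convolution `⟨J∗h⟩_μ(θ)` for binary disorder. -/
def Jconv (K ω₀ : ℝ) (h : ℝ → ℝ → ℝ) (θ : ℝ) : ℝ :=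
  -(K / 2) * ((∫ φ in (0:ℝ)..(2 * Real.pi), Real.sin φ * h (θ - φ) (-ω₀)) +
    (∫ φ in (0:ℝ)..(2 * Real.pi), Real.sin φ * h (θ - φ) ω₀))

/-- The linearized evolution operator `L` around the stationary density `q`. -/
def Lop (K ω₀ r : ℝ) (h : ℝ → ℝ → ℝ) (θ ω : ℝ) : ℝ :=
  (1 / 2) * deriv (deriv (fun u => h u ω)) θ -
    deriv (fun u => h u ω * (Jconv K ω₀ (q K r) u + ω) + q K r u ω * Jconv K ω₀ h u) θ

/-!
The cosine relation is the fixed-point equation itself. The sine relation follows from the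
reflection symmetry `q(θ, -ω) = q(-θ, ω)`: the sine moments of the two populations cancel.
Expanding `sin(θ - u)` in the convolution then expresses `⟨J∗q⟩_μ(θ)` through these two moments.
-/

namespace Function.Periodic

variable {g : ℝ → ℝ} {T : ℝ}

theorem intervalIntegral_comp_neg (hg : Periodic g T) :
    ∫ θ in (0:ℝ)..T, g (-θ) = ∫ θ in (0:ℝ)..T, g θ := by
  rw [intervalIntegral.integral_comp_neg, neg_zero]
  simpa using hg.intervalIntegral_add_eq (-T) 0

theorem intervalIntegral_comp_sub_left (hg : Periodic g T) (θ : ℝ) :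
    ∫ φ in (0:ℝ)..T, g (θ - φ) = ∫ u in (0:ℝ)..T, g u := by
  rw [intervalIntegral.integral_comp_sub_left, sub_zero]
  simpa using hg.intervalIntegral_add_eq (θ - T) 0

end Function.Periodic

theorem intervalIntegral_sin_mul_comp_sub {h : ℝ → ℝ} (hc : Continuous h)
    (hp : Function.Periodic h (2 * Real.pi)) (θ : ℝ) :
    ∫ φ in (0:ℝ)..(2 * Real.pi), Real.sin φ * h (θ - φ) =
      Real.sin θ * (∫ u in (0:ℝ)..(2 * Real.pi), Real.cos u * h u) -
        Real.cos θ * ∫ u in (0:ℝ)..(2 * Real.pi), Real.sin u * h u := by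
  have hper : Function.Periodic (fun u => Real.sin (θ - u) * h u) (2 * Real.pi) := fun u => by
    simp only [← sub_sub, Real.sin_sub_two_pi, hp u]
  calc ∫ φ in (0:ℝ)..(2 * Real.pi), Real.sin φ * h (θ - φ)
      = ∫ φ in (0:ℝ)..(2 * Real.pi), (fun u => Real.sin (θ - u) * h u) (θ - φ) := by
        simp only [sub_sub_cancel]
    _ = ∫ u in (0:ℝ)..(2 * Real.pi), (Real.sin θ * (Real.cos u * h u) -
          Real.cos θ * (Real.sin u * h u)) := by
        rw [hper.intervalIntegral_comp_sub_left]
        simp only [Real.sin_sub]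
        congr 1 with u
        ring
    _ = _ := by
        rw [intervalIntegral.integral_sub (by apply Continuous.intervalIntegrable; fun_prop)
            (by apply Continuous.intervalIntegrable; fun_prop),
          intervalIntegral.integral_const_mul, intervalIntegral.integral_const_mul]

theorem G_add_two_pi (u ω x : ℝ) : G (u + 2 * Real.pi) ω x = G u ω x + 4 * Real.pi * ω := by
  simp only [G, Real.cos_add_two_pi]; ring

theorem G_neg_neg (u ω x : ℝ) : G (-u) (-ω) x = G u ω x := by
  simp only [G, Real.cos_neg]; ring

theorem continuous_exp_neg_G (ω x : ℝ) : Continuous fun u => Real.exp (-G u ω x) := by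
  unfold G; fun_prop

def primitiveExpNegG (ω x θ : ℝ) : ℝ := ∫ u in (0:ℝ)..θ, Real.exp (-G u ω x)

theorem S_eq_primitiveExpNegG (θ ω x : ℝ) : S θ ω x = Real.exp (G θ ω x) *
    ((1 - Real.exp (4 * Real.pi * ω)) * primitiveExpNegG ω x θ +
      Real.exp (4 * Real.pi * ω) * primitiveExpNegG ω x (2 * Real.pi)) := rfl

theorem continuous_primitiveExpNegG (ω x : ℝ) : Continuous (primitiveExpNegG ω x) :=
  intervalIntegral.continuous_primitive
    (fun a b => (continuous_exp_neg_G ω x).intervalIntegrable a b) 0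

theorem primitiveExpNegG_add_two_pi (ω x θ : ℝ) :
    primitiveExpNegG ω x (θ + 2 * Real.pi) =
      primitiveExpNegG ω x (2 * Real.pi) +
        Real.exp (-(4 * Real.pi * ω)) * primitiveExpNegG ω x θ := by
  have hshift : ∫ u in (2 * Real.pi)..(θ + 2 * Real.pi), Real.exp (-G u ω x) =
      Real.exp (-(4 * Real.pi * ω)) * primitiveExpNegG ω x θ := by
    rw [primitiveExpNegG, ← intervalIntegral.integral_const_mul]
    simpa [G_add_two_pi, ← Real.exp_add, add_comm] using
      (intervalIntegral.integral_comp_add_right (fun u => Real.exp (-G u ω x)) (2 * Real.pi)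
        (a := 0) (b := θ)).symm
  rw [← hshift, primitiveExpNegG, primitiveExpNegG,
    intervalIntegral.integral_add_adjacent_intervals
      ((continuous_exp_neg_G ω x).intervalIntegrable _ _)
      ((continuous_exp_neg_G ω x).intervalIntegrable _ _)]

theorem primitiveExpNegG_neg_neg (ω x θ : ℝ) :
    primitiveExpNegG (-ω) x (-θ) = -primitiveExpNegG ω x θ := by
  have h := intervalIntegral.integral_comp_neg (fun u => Real.exp (-G u (-ω) x))
    (a := 0) (b := θ)
  simp only [G_neg_neg, neg_zero] at h
  rw [primitiveExpNegG, primitiveExpNegG, h, intervalIntegral.integral_symm]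

theorem primitiveExpNegG_neg_two_pi (ω x : ℝ) :
    primitiveExpNegG (-ω) x (2 * Real.pi) =
      Real.exp (4 * Real.pi * ω) * primitiveExpNegG ω x (2 * Real.pi) := by
  have h := primitiveExpNegG_add_two_pi (-ω) x (-(2 * Real.pi))
  rw [neg_add_cancel, primitiveExpNegG_neg_neg, mul_neg, mul_neg, neg_neg, primitiveExpNegG,
    intervalIntegral.integral_same] at h
  linarith

theorem S_add_two_pi (θ ω x : ℝ) : S (θ + 2 * Real.pi) ω x = S θ ω x := by
  have hinv : Real.exp (-(4 * Real.pi * ω)) * Real.exp (4 * Real.pi * ω) = 1 := by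
    rw [← Real.exp_add, neg_add_cancel, Real.exp_zero]
  rw [S_eq_primitiveExpNegG, S_eq_primitiveExpNegG, G_add_two_pi, primitiveExpNegG_add_two_pi,
    Real.exp_add]
  linear_combination Real.exp (G θ ω x) * (1 - Real.exp (4 * Real.pi * ω)) *
    primitiveExpNegG ω x θ * hinv

theorem S_neg_neg (θ ω x : ℝ) :
    S (-θ) (-ω) x = Real.exp (-(4 * Real.pi * ω)) * S θ ω x := by
  have hinv : Real.exp (-(4 * Real.pi * ω)) * Real.exp (4 * Real.pi * ω) = 1 := by
    rw [← Real.exp_add, neg_add_cancel, Real.exp_zero]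
  rw [S_eq_primitiveExpNegG, S_eq_primitiveExpNegG, G_neg_neg, primitiveExpNegG_neg_neg,
    primitiveExpNegG_neg_two_pi]
  simp only [mul_neg]
  linear_combination Real.exp (G θ ω x) * primitiveExpNegG ω x θ * hinv

theorem S_periodic (ω x : ℝ) : Function.Periodic (fun θ => S θ ω x) (2 * Real.pi) :=
  fun θ => S_add_two_pi θ ω x

theorem continuous_S (ω x : ℝ) : Continuous fun θ => S θ ω x := by
  simp only [S_eq_primitiveExpNegG]
  have := continuous_primitiveExpNegG ω x
  unfold G
  fun_prop

theorem Z_neg (ω x : ℝ) : Z (-ω) x = Real.exp (-(4 * Real.pi * ω)) * Z ω x := by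
  rw [Z, Z, ← (S_periodic ω x).intervalIntegral_comp_neg, ← intervalIntegral.integral_const_mul]
  congr 1 with θ
  rw [← S_neg_neg, neg_neg]

theorem q_neg (K r θ ω : ℝ) : q K r θ (-ω) = q K r (-θ) ω := by
  rw [q, q, Z_neg, ← neg_neg θ, S_neg_neg, neg_neg,
    mul_div_mul_left _ _ (Real.exp_ne_zero _)]

theorem q_periodic (K r ω : ℝ) : Function.Periodic (fun θ => q K r θ ω) (2 * Real.pi) :=
  fun θ => by simp only [q, S_add_two_pi]

theorem continuous_q (K r ω : ℝ) : Continuous fun θ => q K r θ ω :=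
  (continuous_S ω _).div_const _

theorem intervalIntegral_mul_q (f : ℝ → ℝ) (K r ω : ℝ) :
    ∫ u in (0:ℝ)..(2 * Real.pi), f u * q K r u ω =
      (∫ u in (0:ℝ)..(2 * Real.pi), f u * S u ω (2 * K * r)) / Z ω (2 * K * r) := by
  simp only [q, mul_div_assoc']
  exact intervalIntegral.integral_div _ _

theorem intervalIntegral_sin_mul_q_neg (K r ω : ℝ) :
    ∫ u in (0:ℝ)..(2 * Real.pi), Real.sin u * q K r u (-ω) =
      -∫ u in (0:ℝ)..(2 * Real.pi), Real.sin u * q K r u ω := by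
  have hper : Function.Periodic (fun u => Real.sin u * q K r u ω) (2 * Real.pi) := fun u => by
    simp only [Real.sin_add_two_pi, q_periodic K r ω u]
  rw [← hper.intervalIntegral_comp_neg, ← intervalIntegral.integral_neg]
  congr 1 with u
  rw [q_neg, Real.sin_neg, neg_mul, neg_neg]

theorem stmt3_general (K ω₀ r : ℝ)
    (hfix : r = psiMu ω₀ (2 * K * r)) :
    ((1 / 2) * ((∫ u in (0:ℝ)..(2 * Real.pi), Real.cos u * q K r u (-ω₀)) +
        (∫ u in (0:ℝ)..(2 * Real.pi), Real.cos u * q K r u ω₀)) = r) ∧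
      ((1 / 2) * ((∫ u in (0:ℝ)..(2 * Real.pi), Real.sin u * q K r u (-ω₀)) +
        (∫ u in (0:ℝ)..(2 * Real.pi), Real.sin u * q K r u ω₀)) = 0) ∧
      ∀ θ : ℝ, Jconv K ω₀ (q K r) θ = -(K * r * Real.sin θ) := by
  have hcos : (1 / 2) * ((∫ u in (0:ℝ)..(2 * Real.pi), Real.cos u * q K r u (-ω₀)) +
      (∫ u in (0:ℝ)..(2 * Real.pi), Real.cos u * q K r u ω₀)) = r := by
    rw [intervalIntegral_mul_q, intervalIntegral_mul_q]
    exact hfix.symm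
  have hsin : (1 / 2) * ((∫ u in (0:ℝ)..(2 * Real.pi), Real.sin u * q K r u (-ω₀)) +
      (∫ u in (0:ℝ)..(2 * Real.pi), Real.sin u * q K r u ω₀)) = 0 := by
    rw [intervalIntegral_sin_mul_q_neg]
    ring
  refine ⟨hcos, hsin, fun θ => ?_⟩
  rw [Jconv, intervalIntegral_sin_mul_comp_sub (continuous_q K r _) (q_periodic K r _),
    intervalIntegral_sin_mul_comp_sub (continuous_q K r _) (q_periodic K r _)]
  linear_combination (-(K * Real.sin θ)) * hcos + (K * Real.cos θ) * hsin

/-- Self-consistency of the stationary density: the averaged cosine integral equals `r`,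
the averaged sine integral vanishes, and the averaged convolution is `−K r sin`. -/
theorem stmt3 (K ω₀ r : ℝ) (hK : 0 < K) (hω₀ : 0 < ω₀) (hr : 0 < r)
    (hfix : r = psiMu ω₀ (2 * K * r)) :
    ((1 / 2) * ((∫ u in (0:ℝ)..(2 * Real.pi), Real.cos u * q K r u (-ω₀)) +
        (∫ u in (0:ℝ)..(2 * Real.pi), Real.cos u * q K r u ω₀)) = r) ∧
      ((1 / 2) * ((∫ u in (0:ℝ)..(2 * Real.pi), Real.sin u * q K r u (-ω₀)) +
        (∫ u in (0:ℝ)..(2 * Real.pi), Real.sin u * q K r u ω₀)) = 0) ∧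
      ∀ θ : ℝ, Jconv K ω₀ (q K r) θ = -(K * r * Real.sin θ) :=
  stmt3_general K ω₀ r hfix
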